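/- Let (γ,v₁,v₂) be a pseudo-spherical spacelike framed curve on I with ⟨v₁,v₁⟩ = ε, and let v₀ ∈ AdS³ and s₀ ∈ I. Then d_{v₀}(s₀) = 0 if and only if there exist a, b, c ∈ ℝ such that v₀ = γ(s₀) + a v₁(s₀) + b v₂(s₀) + c μ(s₀) and c² = −ε(a² − b²). -/
import Mathlib


noncomputable section

/-- ℝ⁴ as `Fin 4 → ℝ`, carrying the pseudo-scalar product of index 2. -/
abbrev R4 : Type := Fin 4 → ℝ

/-- ℝ³ as `Fin 3 → ℝ`. -/
abbrev R3 : Type := Fin 3 → ℝ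

/-- The pseudo-scalar product ⟨u,w⟩ = −u₁w₁ − u₂w₂ + u₃w₃ + u₄w₄ of ℝ⁴₂. -/
def pip (u w : R4) : ℝ :=
  -(u 0 * w 0) - u 1 * w 1 + u 2 * w 2 + u 3 * w 3

/-- The anti-de Sitter 3-space AdS³ = {u : ⟨u,u⟩ = −1}. -/
def AdS3 : Set R4 := {u | pip u u = -1}

/-- The 3×3 minor of the rows u,v,w using columns a,b,c. -/
def minor3 (u v w : R4) (a b c : Fin 4) : ℝ :=
  u a * (v b * w c - v c * w b) - u b * (v a * w c - v c * w a)
    + u c * (v a * w b - v b * w a)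

/-- The triple product u×v×w in ℝ⁴₂, the formal determinant with first row
(−e₁,−e₂,e₃,e₄). -/
def trip (u v w : R4) : R4 :=
  ![-(minor3 u v w 1 2 3), minor3 u v w 0 2 3, minor3 u v w 0 1 3,
    -(minor3 u v w 0 1 2)]

/-- A pseudo-spherical spacelike framed curve on `I` with sign `ε`. -/
structure IsFramedCurve (I : Set ℝ) (γ v₁ v₂ : ℝ → R4) (ε : ℝ) : Prop where
  eps : ε = 1 ∨ ε = -1
  smooth_γ : ContDiffOn ℝ (⊤ : ℕ∞) γ I
  smooth_v₁ : ContDiffOn ℝ (⊤ : ℕ∞) v₁ I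
  smooth_v₂ : ContDiffOn ℝ (⊤ : ℕ∞) v₂ I
  mem_ads : ∀ s ∈ I, γ s ∈ AdS3
  norm_v₁ : ∀ s ∈ I, pip (v₁ s) (v₁ s) = ε
  norm_v₂ : ∀ s ∈ I, pip (v₂ s) (v₂ s) = -ε
  orth_v₁v₂ : ∀ s ∈ I, pip (v₁ s) (v₂ s) = 0
  orth_γv₁ : ∀ s ∈ I, pip (γ s) (v₁ s) = 0
  orth_γv₂ : ∀ s ∈ I, pip (γ s) (v₂ s) = 0
  tang_v₁ : ∀ s ∈ I, pip (deriv γ s) (v₁ s) = 0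
  tang_v₂ : ∀ s ∈ I, pip (deriv γ s) (v₂ s) = 0

/-- μ(s) = γ(s)×v₁(s)×v₂(s). -/
def muF (γ v₁ v₂ : ℝ → R4) (s : ℝ) : R4 := trip (γ s) (v₁ s) (v₂ s)

/-- α(s) = ⟨γ′(s), μ(s)⟩. -/
def curvA (γ v₁ v₂ : ℝ → R4) (s : ℝ) : ℝ := pip (deriv γ s) (muF γ v₁ v₂ s)

/-- ℓ(s) = −ε⟨v₁′(s), v₂(s)⟩. -/
def curvL (ε : ℝ) (v₁ v₂ : ℝ → R4) (s : ℝ) : ℝ := -ε * pip (deriv v₁ s) (v₂ s)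

/-- m(s) = ⟨v₁′(s), μ(s)⟩. -/
def curvM (γ v₁ v₂ : ℝ → R4) (s : ℝ) : ℝ := pip (deriv v₁ s) (muF γ v₁ v₂ s)

/-- n(s) = ⟨v₂′(s), μ(s)⟩. -/
def curvN (γ v₁ v₂ : ℝ → R4) (s : ℝ) : ℝ := pip (deriv v₂ s) (muF γ v₁ v₂ s)

/-- The nullcone front NF±(s,λ) = γ(s) + λ(v₁(s) ± v₂(s)), with sign `e = ±1`. -/
def NF (γ v₁ v₂ : ℝ → R4) (e : ℝ) (q : ℝ × ℝ) : R4 :=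
  γ q.1 + q.2 • (v₁ q.1 + e • v₂ q.1)

/-- The function σ± of Theorem 4.3, with sign `e = ±1`. -/
def sigmaF (γ v₁ v₂ : ℝ → R4) (ε e : ℝ) (s : ℝ) : ℝ :=
  curvA γ v₁ v₂ s *
      (-(deriv (curvM γ v₁ v₂) s + e * deriv (curvN γ v₁ v₂) s)
        + curvL ε v₁ v₂ s * (curvN γ v₁ v₂ s + e * curvM γ v₁ v₂ s))
    + deriv (curvA γ v₁ v₂) s * (curvM γ v₁ v₂ s + e * curvN γ v₁ v₂ s)

/-- A point is a singular point of `f : ℝ×ℝ → ℝ⁴₂` when the two partial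
derivatives are linearly dependent (the differential has rank < 2). -/
def SingularAt (f : ℝ × ℝ → R4) (q : ℝ × ℝ) : Prop :=
  ¬ LinearIndependent ℝ
      ![deriv (fun t => f (t, q.2)) q.1, deriv (fun l => f (q.1, l)) q.2]

/-- The cuspidal edge model CE(u,v) = (u², u³, v). -/
def CE : ℝ × ℝ → R3 := fun q => ![q.1 ^ 2, q.1 ^ 3, q.2]

/-- The swallowtail model SW(u,v) = (3u⁴+u²v, 4u³+2uv, v). -/
def SW : ℝ × ℝ → R3 :=
  fun q => ![3 * q.1 ^ 4 + q.1 ^ 2 * q.2, 4 * q.1 ^ 3 + 2 * q.1 * q.2, q.2]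

/-- `f` (a map into AdS³) is locally diffeomorphic at `p` to the model `g` at `0`:
there are a smooth diffeomorphism `φ` from a neighborhood `U` of `0` in ℝ² onto a
neighborhood `V` of `p` with `φ 0 = p`, and a smooth diffeomorphism `Ψ` from a
neighborhood `W` of `f p` in the submanifold AdS³ onto an open set `W'` of ℝ³
with `Ψ (f p) = g 0`, such that `Ψ ∘ f ∘ φ = g` near `0`. -/
def LocallyDiffeoAt (f : ℝ × ℝ → R4) (p : ℝ × ℝ) (g : ℝ × ℝ → R3) : Prop :=
  ∃ (U V : Set (ℝ × ℝ)) (φ φinv : ℝ × ℝ → ℝ × ℝ)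
    (W : Set R4) (W' : Set R3) (Ψ : R4 → R3) (Ψinv : R3 → R4),
    IsOpen U ∧ (0 : ℝ × ℝ) ∈ U ∧ IsOpen V ∧ p ∈ V ∧
    ContDiffOn ℝ (⊤ : ℕ∞) φ U ∧ Set.BijOn φ U V ∧ φ 0 = p ∧
    ContDiffOn ℝ (⊤ : ℕ∞) φinv V ∧ (∀ x ∈ U, φinv (φ x) = x) ∧
    (∃ O : Set R4, IsOpen O ∧ W = O ∩ AdS3) ∧ f p ∈ W ∧ IsOpen W' ∧
    ContDiffOn ℝ (⊤ : ℕ∞) Ψ W ∧ Set.BijOn Ψ W W' ∧ Ψ (f p) = g 0 ∧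
    ContDiffOn ℝ (⊤ : ℕ∞) Ψinv W' ∧ (∀ y ∈ W, Ψinv (Ψ y) = y) ∧
    (∀ x ∈ U, f (φ x) ∈ W) ∧ (∀ x ∈ U, Ψ (f (φ x)) = g x)

/-- The anti-de Sitter distance-squared function d_{v₀}(s) = ⟨γ(s)−v₀, γ(s)−v₀⟩. -/
def dSq (γ : ℝ → R4) (v₀ : R4) (s : ℝ) : ℝ := pip (γ s - v₀) (γ s - v₀)



private lemma pip_symm (u w : R4) : pip u w = pip w u := by unfold pip; ring

private lemma trip_apply0 (u v w : R4) : trip u v w 0 = -(minor3 u v w 1 2 3) := rfl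
private lemma trip_apply1 (u v w : R4) : trip u v w 1 = minor3 u v w 0 2 3 := rfl
private lemma trip_apply2 (u v w : R4) : trip u v w 2 = minor3 u v w 0 1 3 := rfl
private lemma trip_apply3 (u v w : R4) : trip u v w 3 = -(minor3 u v w 0 1 2) := rfl

private lemma pip_trip₁ (u v w : R4) : pip u (trip u v w) = 0 := by
  simp only [pip, trip_apply0, trip_apply1, trip_apply2, trip_apply3, minor3]; ring

private lemma pip_trip₂ (u v w : R4) : pip v (trip u v w) = 0 := by
  simp only [pip, trip_apply0, trip_apply1, trip_apply2, trip_apply3, minor3]; ring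

private lemma pip_trip₃ (u v w : R4) : pip w (trip u v w) = 0 := by
  simp only [pip, trip_apply0, trip_apply1, trip_apply2, trip_apply3, minor3]; ring

private lemma pipTT (u v w : R4) :
    pip (trip u v w) (trip u v w) =
      pip u u * (pip v v * pip w w - pip v w ^ 2)
        - pip u v * (pip u v * pip w w - pip v w * pip u w)
        + pip u w * (pip u v * pip v w - pip v v * pip u w) := by
  simp only [pip, trip_apply0, trip_apply1, trip_apply2, trip_apply3, minor3]; ring

private lemma pip_comb (u g x y m : R4) (a b c : ℝ) :
    pip u (g + a • x + b • y + c • m)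
      = pip u g + a * pip u x + b * pip u y + c * pip u m := by
  simp only [pip, Pi.add_apply, Pi.smul_apply, smul_eq_mul]; ring

private lemma pip_self_comb (g x y m : R4) (a b c : ℝ) :
    pip (g + a • x + b • y + c • m) (g + a • x + b • y + c • m)
      = pip g g + a ^ 2 * pip x x + b ^ 2 * pip y y + c ^ 2 * pip m m
        + 2 * a * pip g x + 2 * b * pip g y + 2 * c * pip g m
        + 2 * (a * b) * pip x y + 2 * (a * c) * pip x m + 2 * (b * c) * pip y m := by
  simp only [pip, Pi.add_apply, Pi.smul_apply, smul_eq_mul]; ring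

private lemma pip_sub_right (u v w : R4) : pip u (v - w) = pip u v - pip u w := by
  simp only [pip, Pi.sub_apply]; ring

private lemma orth_eq_zero (g x y : R4)
    (hTT : pip (trip g x y) (trip g x y) = 1) (w : R4)
    (h0 : pip g w = 0) (h1 : pip x w = 0) (h2 : pip y w = 0)
    (h3 : pip (trip g x y) w = 0) : w = 0 := by
  simp only [pip, trip_apply0, trip_apply1, trip_apply2, trip_apply3, minor3]
    at h0 h1 h2 h3 hTT
  have e0 : w 0 = 0 := by
    linear_combination ((g 3*x 2*x 3*y 0*y 2 - 1*g 3*x 2^2*y 0*y 3 - 1*g 3*x 1*x 3*y 0*y 1 + g 3*x 1^2*y 0*y 3 - 1*g 3*x 0*x 3*y 2^2 + g 3*x 0*x 3*y 1^2 + g 3*x 0*x 2*y 2*y 3 - 1*g 3*x 0*x 1*y 1*y 3 - 1*g 2*x 3^2*y 0*y 2 + g 2*x 2*x 3*y 0*y 3 - 1*g 2*x 1*x 2*y 0*y 1 + g 2*x 1^2*y 0*y 2 + g 2*x 0*x 3*y 2*y 3 - 1*g 2*x 0*x 2*y 3^2 + g 2*x 0*x 2*y 1^2 - 1*g 2*x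 0*x 1*y 1*y 2 + g 1*x 3^2*y 0*y 1 + g 1*x 2^2*y 0*y 1 - 1*g 1*x 1*x 3*y 0*y 3 - 1*g 1*x 1*x 2*y 0*y 2 - 1*g 1*x 0*x 3*y 1*y 3 - 1*g 1*x 0*x 2*y 1*y 2 + g 1*x 0*x 1*y 3^2 + g 1*x 0*x 1*y 2^2 + g 0*x 3^2*y 2^2 - 1*g 0*x 3^2*y 1^2 - 2*g 0*x 2*x 3*y 2*y 3 + g 0*x 2^2*y 3^2 - 1*g 0*x 2^2*y 1^2 + 2*g 0*x 1*x 3*y 1*y 3 + 2*g 0*x 1*x 2*y 1*y 2 - 1*g 0*x 1^2*y 3^2 - 1*g 0*x 1^2*y 2^2 : ℝ)) * h0 + ((-1*g 3^2*x 2*y 0*y 2 + g 3^2*x 1*y 0*y 1 + g 3^2*x 0*y 2^2 - 1*g 3^2*x 0*y 1^2 + g 2*g 3*x 3*y 0*y 2 + g 2*g 3*x 2*y 0*y 3 - 2*g 2*g 3*x 0*y 2*y 3 - 1*g 2^2*x 3*y 0*y 3 + g 2^2*x 1*y 0*y 1 + g 2^2*x 0*y 3^2 - 1*g 2^2*x 0*y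 1^2 - 1*g 1*g 3*x 3*y 0*y 1 - 1*g 1*g 3*x 1*y 0*y 3 + 2*g 1*g 3*x 0*y 1*y 3 - 1*g 1*g 2*x 2*y 0*y 1 - 1*g 1*g 2*x 1*y 0*y 2 + 2*g 1*g 2*x 0*y 1*y 2 + g 1^2*x 3*y 0*y 3 + g 1^2*x 2*y 0*y 2 - 1*g 1^2*x 0*y 3^2 - 1*g 1^2*x 0*y 2^2 - 1*g 0*g 3*x 3*y 2^2 + g 0*g 3*x 3*y 1^2 + g 0*g 3*x 2*y 2*y 3 - 1*g 0*g 3*x 1*y 1*y 3 + g 0*g 2*x 3*y 2*y 3 - 1*g 0*g 2*x 2*y 3^2 + g 0*g 2*x 2*y 1^2 - 1*g 0*g 2*x 1*y 1*y 2 - 1*g 0*g 1*x 3*y 1*y 3 - 1*g 0*g 1*x 2*y 1*y 2 + g 0*g 1*x 1*y 3^2 + g 0*g 1*x 1*y 2^2 : ℝ)) * h1 + ((g 3^2*x 2^2*y 0 - 1*g 3^2*x 1^2*y 0 - 1*g 3^2*x 0*x 2*y 2 + g 3^2*x 0*x 1*y 1 - 2*g 2*g 3*x 2*x 3*y 0 +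 g 2*g 3*x 0*x 3*y 2 + g 2*g 3*x 0*x 2*y 3 + g 2^2*x 3^2*y 0 - 1*g 2^2*x 1^2*y 0 - 1*g 2^2*x 0*x 3*y 3 + g 2^2*x 0*x 1*y 1 + 2*g 1*g 3*x 1*x 3*y 0 - 1*g 1*g 3*x 0*x 3*y 1 - 1*g 1*g 3*x 0*x 1*y 3 + 2*g 1*g 2*x 1*x 2*y 0 - 1*g 1*g 2*x 0*x 2*y 1 - 1*g 1*g 2*x 0*x 1*y 2 - 1*g 1^2*x 3^2*y 0 - 1*g 1^2*x 2^2*y 0 + g 1^2*x 0*x 3*y 3 + g 1^2*x 0*x 2*y 2 + g 0*g 3*x 2*x 3*y 2 - 1*g 0*g 3*x 2^2*y 3 - 1*g 0*g 3*x 1*x 3*y 1 + g 0*g 3*x 1^2*y 3 - 1*g 0*g 2*x 3^2*y 2 + g 0*g 2*x 2*x 3*y 3 - 1*g 0*g 2*x 1*x 2*y 1 + g 0*g 2*x 1^2*y 2 + g 0*g 1*x 3^2*y 1 + g 0*g 1*x 2^2*y 1 - 1*g 0*g 1*x 1*x 3*y 3 - 1*g 0*g 1*x 1*x 2*y 2 :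 ℝ)) * h2 + ((g 3*x 2*y 1 - 1*g 3*x 1*y 2 - 1*g 2*x 3*y 1 + g 2*x 1*y 3 + g 1*x 3*y 2 - 1*g 1*x 2*y 3 : ℝ)) * h3 - w 0 * hTT
  have e1 : w 1 = 0 := by
    linear_combination ((g 3*x 2*x 3*y 1*y 2 - 1*g 3*x 2^2*y 1*y 3 - 1*g 3*x 1*x 3*y 2^2 + g 3*x 1*x 3*y 0^2 + g 3*x 1*x 2*y 2*y 3 - 1*g 3*x 0*x 3*y 0*y 1 - 1*g 3*x 0*x 1*y 0*y 3 + g 3*x 0^2*y 1*y 3 - 1*g 2*x 3^2*y 1*y 2 + g 2*x 2*x 3*y 1*y 3 + g 2*x 1*x 3*y 2*y 3 - 1*g 2*x 1*x 2*y 3^2 + g 2*x 1*x 2*y 0^2 - 1*g 2*x 0*x 2*y 0*y 1 - 1*g 2*x 0*x 1*y 0*y 2 + g 2*x 0^2*y 1*y 2 + g 1*x 3^2*y 2^2 - 1*g 1*x 3^2*y 0^2 - 2*g 1*x 2*x 3*y 2*y 3 + g 1*x 2^2*y 3^2 - 1*g 1*x 2^2*y 0^2 + 2*g 1*x 0*x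 3*y 0*y 3 + 2*g 1*x 0*x 2*y 0*y 2 - 1*g 1*x 0^2*y 3^2 - 1*g 1*x 0^2*y 2^2 + g 0*x 3^2*y 0*y 1 + g 0*x 2^2*y 0*y 1 - 1*g 0*x 1*x 3*y 0*y 3 - 1*g 0*x 1*x 2*y 0*y 2 - 1*g 0*x 0*x 3*y 1*y 3 - 1*g 0*x 0*x 2*y 1*y 2 + g 0*x 0*x 1*y 3^2 + g 0*x 0*x 1*y 2^2 : ℝ)) * h0 + ((-1*g 3^2*x 2*y 1*y 2 + g 3^2*x 1*y 2^2 - 1*g 3^2*x 1*y 0^2 + g 3^2*x 0*y 0*y 1 + g 2*g 3*x 3*y 1*y 2 + g 2*g 3*x 2*y 1*y 3 - 2*g 2*g 3*x 1*y 2*y 3 - 1*g 2^2*x 3*y 1*y 3 + g 2^2*x 1*y 3^2 - 1*g 2^2*x 1*y 0^2 + g 2^2*x 0*y 0*y 1 - 1*g 1*g 3*x 3*y 2^2 + g 1*g 3*x 3*y 0^2 + g 1*g 3*x 2*y 2*y 3 - 1*g 1*g 3*x 0*y 0*y 3 + g 1*g 2*x 3*y 2*y 3 - 1*g 1*g 2*x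 2*y 3^2 + g 1*g 2*x 2*y 0^2 - 1*g 1*g 2*x 0*y 0*y 2 - 1*g 0*g 3*x 3*y 0*y 1 + 2*g 0*g 3*x 1*y 0*y 3 - 1*g 0*g 3*x 0*y 1*y 3 - 1*g 0*g 2*x 2*y 0*y 1 + 2*g 0*g 2*x 1*y 0*y 2 - 1*g 0*g 2*x 0*y 1*y 2 - 1*g 0*g 1*x 3*y 0*y 3 - 1*g 0*g 1*x 2*y 0*y 2 + g 0*g 1*x 0*y 3^2 + g 0*g 1*x 0*y 2^2 + g 0^2*x 3*y 1*y 3 + g 0^2*x 2*y 1*y 2 - 1*g 0^2*x 1*y 3^2 - 1*g 0^2*x 1*y 2^2 : ℝ)) * h1 + ((g 3^2*x 2^2*y 1 - 1*g 3^2*x 1*x 2*y 2 + g 3^2*x 0*x 1*y 0 - 1*g 3^2*x 0^2*y 1 - 2*g 2*g 3*x 2*x 3*y 1 + g 2*g 3*x 1*x 3*y 2 + g 2*g 3*x 1*x 2*y 3 + g 2^2*x 3^2*y 1 - 1*g 2^2*x 1*x 3*y 3 + g 2^2*x 0*x 1*y 0 - 1*g 2^2*x 0^2*y 1 + g 1*g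 3*x 2*x 3*y 2 - 1*g 1*g 3*x 2^2*y 3 - 1*g 1*g 3*x 0*x 3*y 0 + g 1*g 3*x 0^2*y 3 - 1*g 1*g 2*x 3^2*y 2 + g 1*g 2*x 2*x 3*y 3 - 1*g 1*g 2*x 0*x 2*y 0 + g 1*g 2*x 0^2*y 2 - 1*g 0*g 3*x 1*x 3*y 0 + 2*g 0*g 3*x 0*x 3*y 1 - 1*g 0*g 3*x 0*x 1*y 3 - 1*g 0*g 2*x 1*x 2*y 0 + 2*g 0*g 2*x 0*x 2*y 1 - 1*g 0*g 2*x 0*x 1*y 2 + g 0*g 1*x 3^2*y 0 + g 0*g 1*x 2^2*y 0 - 1*g 0*g 1*x 0*x 3*y 3 - 1*g 0*g 1*x 0*x 2*y 2 - 1*g 0^2*x 3^2*y 1 - 1*g 0^2*x 2^2*y 1 + g 0^2*x 1*x 3*y 3 + g 0^2*x 1*x 2*y 2 : ℝ)) * h2 + ((-1*g 3*x 2*y 0 + g 3*x 0*y 2 + g 2*x 3*y 0 - 1*g 2*x 0*y 3 - 1*g 0*x 3*y 2 + g 0*x 2*y 3 : ℝ)) * h3 - w 1 * hTT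
  have e2 : w 2 = 0 := by
    linear_combination ((g 3*x 2*x 3*y 1^2 + g 3*x 2*x 3*y 0^2 - 1*g 3*x 1*x 3*y 1*y 2 - 1*g 3*x 1*x 2*y 1*y 3 + g 3*x 1^2*y 2*y 3 - 1*g 3*x 0*x 3*y 0*y 2 - 1*g 3*x 0*x 2*y 0*y 3 + g 3*x 0^2*y 2*y 3 - 1*g 2*x 3^2*y 1^2 - 1*g 2*x 3^2*y 0^2 + 2*g 2*x 1*x 3*y 1*y 3 - 1*g 2*x 1^2*y 3^2 + g 2*x 1^2*y 0^2 + 2*g 2*x 0*x 3*y 0*y 3 - 2*g 2*x 0*x 1*y 0*y 1 - 1*g 2*x 0^2*y 3^2 + g 2*x 0^2*y 1^2 + g 1*x 3^2*y 1*y 2 - 1*g 1*x 2*x 3*y 1*y 3 - 1*g 1*x 1*x 3*y 2*y 3 + g 1*x 1*x 2*y 3^2 - 1*g 1*x 1*x 2*y 0^2 + g 1*x 0*x 2*y 0*y 1 + g 1*x 0*x 1*y 0*y 2 - 1*g 1*x 0^2*y 1*y 2 + g 0*x 3^2*y 0*y 2 - 1*g 0*x 2*x 3*y 0*y 3 + g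 0*x 1*x 2*y 0*y 1 - 1*g 0*x 1^2*y 0*y 2 - 1*g 0*x 0*x 3*y 2*y 3 + g 0*x 0*x 2*y 3^2 - 1*g 0*x 0*x 2*y 1^2 + g 0*x 0*x 1*y 1*y 2 : ℝ)) * h0 + ((-1*g 3^2*x 2*y 1^2 - 1*g 3^2*x 2*y 0^2 + g 3^2*x 1*y 1*y 2 + g 3^2*x 0*y 0*y 2 + g 2*g 3*x 3*y 1^2 + g 2*g 3*x 3*y 0^2 - 1*g 2*g 3*x 1*y 1*y 3 - 1*g 2*g 3*x 0*y 0*y 3 - 1*g 1*g 3*x 3*y 1*y 2 + 2*g 1*g 3*x 2*y 1*y 3 - 1*g 1*g 3*x 1*y 2*y 3 - 1*g 1*g 2*x 3*y 1*y 3 + g 1*g 2*x 1*y 3^2 - 1*g 1*g 2*x 1*y 0^2 + g 1*g 2*x 0*y 0*y 1 + g 1^2*x 3*y 2*y 3 - 1*g 1^2*x 2*y 3^2 + g 1^2*x 2*y 0^2 - 1*g 1^2*x 0*y 0*y 2 - 1*g 0*g 3*x 3*y 0*y 2 + 2*g 0*g 3*x 2*y 0*y 3 - 1*g 0*g 3*x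 0*y 2*y 3 - 1*g 0*g 2*x 3*y 0*y 3 + g 0*g 2*x 1*y 0*y 1 + g 0*g 2*x 0*y 3^2 - 1*g 0*g 2*x 0*y 1^2 - 2*g 0*g 1*x 2*y 0*y 1 + g 0*g 1*x 1*y 0*y 2 + g 0*g 1*x 0*y 1*y 2 + g 0^2*x 3*y 2*y 3 - 1*g 0^2*x 2*y 3^2 + g 0^2*x 2*y 1^2 - 1*g 0^2*x 1*y 1*y 2 : ℝ)) * h1 + ((g 3^2*x 1*x 2*y 1 - 1*g 3^2*x 1^2*y 2 + g 3^2*x 0*x 2*y 0 - 1*g 3^2*x 0^2*y 2 - 1*g 2*g 3*x 1*x 3*y 1 + g 2*g 3*x 1^2*y 3 - 1*g 2*g 3*x 0*x 3*y 0 + g 2*g 3*x 0^2*y 3 - 1*g 1*g 3*x 2*x 3*y 1 + 2*g 1*g 3*x 1*x 3*y 2 - 1*g 1*g 3*x 1*x 2*y 3 + g 1*g 2*x 3^2*y 1 - 1*g 1*g 2*x 1*x 3*y 3 + g 1*g 2*x 0*x 1*y 0 - 1*g 1*g 2*x 0^2*y 1 - 1*g 1^2*x 3^2*y 2 + g 1^2*x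 2*x 3*y 3 - 1*g 1^2*x 0*x 2*y 0 + g 1^2*x 0^2*y 2 - 1*g 0*g 3*x 2*x 3*y 0 + 2*g 0*g 3*x 0*x 3*y 2 - 1*g 0*g 3*x 0*x 2*y 3 + g 0*g 2*x 3^2*y 0 - 1*g 0*g 2*x 1^2*y 0 - 1*g 0*g 2*x 0*x 3*y 3 + g 0*g 2*x 0*x 1*y 1 + g 0*g 1*x 1*x 2*y 0 + g 0*g 1*x 0*x 2*y 1 - 2*g 0*g 1*x 0*x 1*y 2 - 1*g 0^2*x 3^2*y 2 + g 0^2*x 2*x 3*y 3 - 1*g 0^2*x 1*x 2*y 1 + g 0^2*x 1^2*y 2 : ℝ)) * h2 + ((-1*g 3*x 1*y 0 + g 3*x 0*y 1 + g 1*x 3*y 0 - 1*g 1*x 0*y 3 - 1*g 0*x 3*y 1 + g 0*x 1*y 3 : ℝ)) * h3 - w 2 * hTT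
  have e3 : w 3 = 0 := by
    linear_combination ((-1*g 3*x 2^2*y 1^2 - 1*g 3*x 2^2*y 0^2 + 2*g 3*x 1*x 2*y 1*y 2 - 1*g 3*x 1^2*y 2^2 + g 3*x 1^2*y 0^2 + 2*g 3*x 0*x 2*y 0*y 2 - 2*g 3*x 0*x 1*y 0*y 1 - 1*g 3*x 0^2*y 2^2 + g 3*x 0^2*y 1^2 + g 2*x 2*x 3*y 1^2 + g 2*x 2*x 3*y 0^2 - 1*g 2*x 1*x 3*y 1*y 2 - 1*g 2*x 1*x 2*y 1*y 3 + g 2*x 1^2*y 2*y 3 - 1*g 2*x 0*x 3*y 0*y 2 - 1*g 2*x 0*x 2*y 0*y 3 + g 2*x 0^2*y 2*y 3 - 1*g 1*x 2*x 3*y 1*y 2 + g 1*x 2^2*y 1*y 3 + g 1*x 1*x 3*y 2^2 - 1*g 1*x 1*x 3*y 0^2 - 1*g 1*x 1*x 2*y 2*y 3 + g 1*x 0*x 3*y 0*y 1 + g 1*x 0*x 1*y 0*y 3 - 1*g 1*x 0^2*y 1*y 3 - 1*g 0*x 2*x 3*y 0*y 2 + g 0*x 2^2*y 0*y 3 + g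 0*x 1*x 3*y 0*y 1 - 1*g 0*x 1^2*y 0*y 3 + g 0*x 0*x 3*y 2^2 - 1*g 0*x 0*x 3*y 1^2 - 1*g 0*x 0*x 2*y 2*y 3 + g 0*x 0*x 1*y 1*y 3 : ℝ)) * h0 + ((g 2*g 3*x 2*y 1^2 + g 2*g 3*x 2*y 0^2 - 1*g 2*g 3*x 1*y 1*y 2 - 1*g 2*g 3*x 0*y 0*y 2 - 1*g 2^2*x 3*y 1^2 - 1*g 2^2*x 3*y 0^2 + g 2^2*x 1*y 1*y 3 + g 2^2*x 0*y 0*y 3 - 1*g 1*g 3*x 2*y 1*y 2 + g 1*g 3*x 1*y 2^2 - 1*g 1*g 3*x 1*y 0^2 + g 1*g 3*x 0*y 0*y 1 + 2*g 1*g 2*x 3*y 1*y 2 - 1*g 1*g 2*x 2*y 1*y 3 - 1*g 1*g 2*x 1*y 2*y 3 - 1*g 1^2*x 3*y 2^2 + g 1^2*x 3*y 0^2 + g 1^2*x 2*y 2*y 3 - 1*g 1^2*x 0*y 0*y 3 - 1*g 0*g 3*x 2*y 0*y 2 + g 0*g 3*x 1*y 0*y 1 + g 0*g 3*x 0*y 2^2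 - 1*g 0*g 3*x 0*y 1^2 + 2*g 0*g 2*x 3*y 0*y 2 - 1*g 0*g 2*x 2*y 0*y 3 - 1*g 0*g 2*x 0*y 2*y 3 - 2*g 0*g 1*x 3*y 0*y 1 + g 0*g 1*x 1*y 0*y 3 + g 0*g 1*x 0*y 1*y 3 - 1*g 0^2*x 3*y 2^2 + g 0^2*x 3*y 1^2 + g 0^2*x 2*y 2*y 3 - 1*g 0^2*x 1*y 1*y 3 : ℝ)) * h1 + ((-1*g 2*g 3*x 1*x 2*y 1 + g 2*g 3*x 1^2*y 2 - 1*g 2*g 3*x 0*x 2*y 0 + g 2*g 3*x 0^2*y 2 + g 2^2*x 1*x 3*y 1 - 1*g 2^2*x 1^2*y 3 + g 2^2*x 0*x 3*y 0 - 1*g 2^2*x 0^2*y 3 + g 1*g 3*x 2^2*y 1 - 1*g 1*g 3*x 1*x 2*y 2 + g 1*g 3*x 0*x 1*y 0 - 1*g 1*g 3*x 0^2*y 1 - 1*g 1*g 2*x 2*x 3*y 1 - 1*g 1*g 2*x 1*x 3*y 2 + 2*g 1*g 2*x 1*x 2*y 3 + g 1^2*x 2*x 3*y 2 - 1*g 1^2*x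 2^2*y 3 - 1*g 1^2*x 0*x 3*y 0 + g 1^2*x 0^2*y 3 + g 0*g 3*x 2^2*y 0 - 1*g 0*g 3*x 1^2*y 0 - 1*g 0*g 3*x 0*x 2*y 2 + g 0*g 3*x 0*x 1*y 1 - 1*g 0*g 2*x 2*x 3*y 0 - 1*g 0*g 2*x 0*x 3*y 2 + 2*g 0*g 2*x 0*x 2*y 3 + g 0*g 1*x 1*x 3*y 0 + g 0*g 1*x 0*x 3*y 1 - 2*g 0*g 1*x 0*x 1*y 3 + g 0^2*x 2*x 3*y 2 - 1*g 0^2*x 2^2*y 3 - 1*g 0^2*x 1*x 3*y 1 + g 0^2*x 1^2*y 3 : ℝ)) * h2 + ((g 2*x 1*y 0 - 1*g 2*x 0*y 1 - 1*g 1*x 2*y 0 + g 1*x 0*y 2 + g 0*x 2*y 1 - 1*g 0*x 1*y 2 : ℝ)) * h3 - w 3 * hTT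
  funext i
  fin_cases i <;> simp only [Pi.zero_apply]
  · exact e0
  · exact e1
  · exact e2
  · exact e3

/-- Proposition 5.1 (1): characterization of d_{v₀}(s₀) = 0. -/
theorem dist_squared_zero_iff
    (I : Set ℝ) (hIopen : IsOpen I) (hIconn : I.OrdConnected)
    (γ v₁ v₂ : ℝ → R4) (ε : ℝ) (h : IsFramedCurve I γ v₁ v₂ ε)
    (v₀ : R4) (hv₀ : v₀ ∈ AdS3) (s₀ : ℝ) (hs₀ : s₀ ∈ I) :
    dSq γ v₀ s₀ = 0 ↔
      (∃ a b c : ℝ,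
        v₀ = γ s₀ + a • v₁ s₀ + b • v₂ s₀ + c • muF γ v₁ v₂ s₀ ∧
        c ^ 2 = -ε * (a ^ 2 - b ^ 2)) := by
  have hε2 : ε ^ 2 = 1 := by rcases h.eps with h1 | h1 <;> rw [h1] <;> norm_num
  have hgg : pip (γ s₀) (γ s₀) = -1 := h.mem_ads s₀ hs₀
  have hvv : pip v₀ v₀ = -1 := hv₀
  have hxx : pip (v₁ s₀) (v₁ s₀) = ε := h.norm_v₁ s₀ hs₀
  have hyy : pip (v₂ s₀) (v₂ s₀) = -ε := h.norm_v₂ s₀ hs₀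
  have hxy : pip (v₁ s₀) (v₂ s₀) = 0 := h.orth_v₁v₂ s₀ hs₀
  have hgx : pip (γ s₀) (v₁ s₀) = 0 := h.orth_γv₁ s₀ hs₀
  have hgy : pip (γ s₀) (v₂ s₀) = 0 := h.orth_γv₂ s₀ hs₀
  set g := γ s₀ with hg
  set x := v₁ s₀ with hx
  set y := v₂ s₀ with hy
  have hmu : muF γ v₁ v₂ s₀ = trip g x y := rfl
  set m := trip g x y with hm
  have hTT : pip m m = 1 := by
    rw [hm, pipTT, hgg, hxx, hyy, hxy, hgx, hgy]; linear_combination hε2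
  have hd : dSq γ v₀ s₀ = -2 - 2 * pip g v₀ := by
    have h1 := hgg; have h2 := hvv
    simp only [dSq, pip, Pi.sub_apply] at h1 h2 ⊢
    linear_combination h1 + h2
  rw [hmu, hd]
  constructor
  · intro hdz
    have hgv : pip g v₀ = -1 := by linarith
    have hrep : v₀ = g + (ε * pip x v₀) • x + (-ε * pip y v₀) • y
        + (pip m v₀) • m := by
      have hw : v₀ - (g + (ε * pip x v₀) • x + (-ε * pip y v₀) • y
          + (pip m v₀) • m) = 0 := by
        apply orth_eq_zero g x y hTT
        · rw [pip_sub_right, pip_comb, hgv, hgg, hgx, hgy, hm, pip_trip₁]; ring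
        · rw [pip_sub_right, pip_comb, pip_symm x g, hgx, hxx, hxy, hm, pip_trip₂]
          linear_combination (-(pip x v₀)) * hε2
        · rw [pip_sub_right, pip_comb, pip_symm y g, hgy, pip_symm y x, hxy, hyy,
            hm, pip_trip₃]
          linear_combination (-(pip y v₀)) * hε2
        · rw [pip_sub_right, pip_comb, pip_symm m g, pip_symm m x, pip_symm m y,
            hm, pip_trip₁, pip_trip₂, pip_trip₃]
          rw [← hm, hTT]; ring
      exact sub_eq_zero.mp hw
    refine ⟨ε * pip x v₀, -ε * pip y v₀, pip m v₀, hrep, ?_⟩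
    have h2 : pip (g + (ε * pip x v₀) • x + (-ε * pip y v₀) • y
        + (pip m v₀) • m) (g + (ε * pip x v₀) • x + (-ε * pip y v₀) • y
        + (pip m v₀) • m) = -1 := by rw [← hrep]; exact hvv
    rw [pip_self_comb, hgg, hxx, hyy, hxy, hgx, hgy, hm, pip_trip₁, pip_trip₂,
      pip_trip₃, ← hm, hTT] at h2
    linear_combination h2
  · rintro ⟨a, b, c, hrep, hcc⟩
    have hgv : pip g v₀ = -1 := by
      rw [hrep, pip_comb, hgg, hgx, hgy, hm, pip_trip₁]; ring
    rw [hgv]; ring
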